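/- (Generalized Regge symmetry, type II.) Assume (r1,r2,r3,r4,i,j,N) is admissible and r1 + r2 = r3 + r4, and set ρ′ = (r2 + r4 + i + j)/2 and ρ″ = (r1 + r3 + i + j)/2. Then the tuples (r1, ρ′−r4, r3, ρ′−r2, ρ′−j, ρ′−i, N) and (ρ″−r3, r2, ρ″−r1, r4, ρ″−j, ρ″−i, N) are admissible and satisfy the same fusion relation (first entry plus second entry equals third plus fourth), and F_2^N(r1, r2, i; r3, r4, j) = F_2^N(r1, ρ′−r4, ρ′−j; r3, ρ′−r2, ρ′−i) = F_2^N(ρ″−r3, r2, ρ″−j; ρ″−r1, r4, ρ″−i). For N = 2 these reduce to the classical Regge symmetries of the U_q(sl_2) 6-j symbol; for N > 2 they are new non-tetrahedral symmetries of multiplicity-free U_q(sl_N) 6-j symbols. -/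

import Mathlib

open Finset

/-- The quantum integer `[n] = (tⁿ − t⁻ⁿ)/(t − t⁻¹)`. -/
noncomputable def qint (t : ℝ) (n : ℤ) : ℝ := (t ^ n - t ^ (-n)) / (t - t⁻¹)

/-- The quantum factorial `[n]! = [1][2]⋯[n]`, with `[0]! = 1`
(and value `1` for negative arguments, which never occur below). -/
noncomputable def qfact (t : ℝ) (n : ℤ) : ℝ :=
  ∏ k ∈ Finset.range n.toNat, qint t ((k : ℤ) + 1)

/-- The q-Pochhammer symbol `(x; q)_n = ∏_{s=0}^{n−1} (1 − x qˢ)`. -/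
noncomputable def qpoch (x q : ℝ) (n : ℕ) : ℝ :=
  ∏ s ∈ Finset.range n, (1 - x * q ^ s)

/-- Admissibility of the tuple `(r₁,r₂,r₃,r₄,i,j,N)`. -/
def Admissible (r₁ r₂ r₃ r₄ i j N : ℤ) : Prop :=
  0 ≤ r₁ ∧ 0 ≤ r₂ ∧ 0 ≤ r₃ ∧ 0 ≤ r₄ ∧ 0 ≤ i ∧ 0 ≤ j ∧ 2 ≤ N ∧
  2 ∣ (r₁ + r₂ + i) ∧ 2 ∣ (r₃ + r₄ + i) ∧ 2 ∣ (r₁ + r₄ + j) ∧ 2 ∣ (r₂ + r₃ + j) ∧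
  max |r₁ - r₂| |r₃ - r₄| ≤ i ∧ i ≤ min (r₁ + r₂) (r₃ + r₄) ∧
  max |r₂ - r₃| |r₁ - r₄| ≤ j ∧ j ≤ min (r₂ + r₃) (r₁ + r₄)

/-- `ρ = (r₁+r₂+r₃+r₄)/2`. -/
def rho (r₁ r₂ r₃ r₄ : ℤ) : ℤ := (r₁ + r₂ + r₃ + r₄) / 2

/-- `m_max = (1/2)·min(r₁+r₂−i, r₃+r₄−i, r₁+r₄−j, r₂+r₃−j)`. -/
def mMax (r₁ r₂ r₃ r₄ i j : ℤ) : ℤ :=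
  (min (min (r₁ + r₂ - i) (r₃ + r₄ - i)) (min (r₁ + r₄ - j) (r₂ + r₃ - j))) / 2

/-- `m_min = (1/2)·max(0, r₁+r₃−i−j, r₂+r₄−i−j)`. -/
def mMin (r₁ r₂ r₃ r₄ i j : ℤ) : ℤ :=
  (max 0 (max (r₁ + r₃ - i - j) (r₂ + r₄ - i - j))) / 2

/-- `θ_N(a,b,c)`. -/
noncomputable def theta (t : ℝ) (N a b c : ℤ) : ℝ :=
  Real.sqrt (qfact t ((a + b - c) / 2) * qfact t ((a - b + c) / 2) *
    qfact t ((-a + b + c) / 2) / qfact t ((a + b + c) / 2 + N - 1))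

/-- `K′ = θ_N(r₁,r₂,i)·θ_N(r₃,r₄,i)·θ_N(r₁,r₄,j)·θ_N(r₂,r₃,j)·[N−1]!·[N−2]!`. -/
noncomputable def Kprime (t : ℝ) (N r₁ r₂ r₃ r₄ i j : ℤ) : ℝ :=
  theta t N r₁ r₂ i * theta t N r₃ r₄ i * theta t N r₁ r₄ j * theta t N r₂ r₃ j *
    qfact t (N - 1) * qfact t (N - 2)

/-- The multiplicity-free 6-j expression `F_T^N(r₁,r₂,i; r₃,r₄,j)` of type `T ∈ {1,2}`. -/
noncomputable def F (t : ℝ) (T : ℕ) (N r₁ r₂ i r₃ r₄ j : ℤ) : ℝ :=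
  Kprime t N r₁ r₂ r₃ r₄ i j *
    ∑ m ∈ Finset.Icc (mMin r₁ r₂ r₃ r₄ i j) (mMax r₁ r₂ r₃ r₄ i j),
      (-1 : ℝ) ^ (rho r₁ r₂ r₃ r₄ - m) * qfact t (rho r₁ r₂ r₃ r₄ + N - 1 - m) /
        (qfact t m * qfact t ((r₃ + r₄ - i) / 2 - m) * qfact t ((r₂ + r₃ - j) / 2 - m) *
          qfact t ((r₁ + r₄ - j) / 2 - m) * qfact t ((i + j - r₂ - r₄) / 2 + m) *
          qfact t ((r₁ + r₂ - i) / 2 + (N - 2) * (if T = 2 then 1 else 0) - m) *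
          qfact t ((i + j - r₁ - r₃) / 2 + (N - 2) * (if T = 1 then 1 else 0) + m))

/-- The prefactor `K_T` (for the case `m_min = 0`). -/
noncomputable def Kfac (t : ℝ) (T : ℕ) (N r₁ r₂ i r₃ r₄ j : ℤ) : ℝ :=
  Kprime t N r₁ r₂ r₃ r₄ i j * qfact t (rho r₁ r₂ r₃ r₄ + N - 1) /
    (qfact t ((r₃ + r₄ - i) / 2) *
      qfact t ((r₁ + r₂ - i) / 2 + (N - 2) * (if T = 2 then 1 else 0)) *
      qfact t ((r₂ + r₃ - j) / 2) * qfact t ((r₁ + r₄ - j) / 2) *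
      qfact t ((i + j - r₂ - r₄) / 2) *
      qfact t ((i + j - r₁ - r₃) / 2 + (N - 2) * (if T = 1 then 1 else 0)))

/-!
Write `a₁, …, a₄` for the half-perimeters of the faces of the tetrahedron with edges
`r₁, r₂, r₃, r₄, i, j` and `b₁, b₂, b₃` for the half-lengths of its three 4-cycles. The
substitution `w = ρ - m` puts `F_2^N` in Racah's form
`√(∏_{k,l} [b_l - a_k]! / ∏_k [a_k + N - 1]!) · [N-1]! [N-2]! ·
  Σ_w (-1)^w [w + N - 1]! / (∏_k [w - a_k + (N - 2) δ_{k,2}]! · ∏_l [b_l - w]!)`,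
which is symmetric in `b₁, b₂, b₃`. The two Regge transformations fix every `a_k` and exchange
`b₁` with `b₂`, respectively `b₁` with `b₃`.
-/

theorem qint_pos {t : ℝ} (ht : 0 < t) (ht1 : t ≠ 1) {n : ℤ} (hn : 0 < n) : 0 < qint t n := by
  unfold qint
  rcases lt_or_gt_of_ne ht1 with h | h
  · apply div_pos_of_neg_of_neg
    · have := zpow_lt_zpow_right_of_lt_one₀ ht h (show -n < n by omega)
      linarith
    · have : 1 < t⁻¹ := (one_lt_inv₀ ht).mpr h
      linarith
  · apply div_pos
    · have := zpow_lt_zpow_right₀ h (show -n < n by omega)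
      linarith
    · have : t⁻¹ < 1 := inv_lt_one_of_one_lt₀ h
      linarith

theorem qfact_pos {t : ℝ} (ht : 0 < t) (ht1 : t ≠ 1) (n : ℤ) : 0 < qfact t n :=
  prod_pos fun _ _ => qint_pos ht ht1 (by omega)

theorem theta_eq (t : ℝ) (N : ℤ) {a b c x y z s : ℤ} (hs : a + b + c = 2 * s)
    (hx : a + b - c = 2 * x) (hy : a - b + c = 2 * y) (hz : -a + b + c = 2 * z) :
    theta t N a b c = √(qfact t x * qfact t y * qfact t z / qfact t (s + N - 1)) := by
  rw [theta, show (a + b - c) / 2 = x by omega, show (a - b + c) / 2 = y by omega,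
    show (-a + b + c) / 2 = z by omega, show (a + b + c) / 2 = s by omega]

section Racah

variable (t : ℝ) (N a₁ a₂ a₃ a₄ : ℤ)

noncomputable def racahColumn (b : ℤ) : ℝ :=
  qfact t (b - a₁) * qfact t (b - a₂) * qfact t (b - a₃) * qfact t (b - a₄)

noncomputable def racahDelta (b₁ b₂ b₃ : ℤ) : ℝ :=
  √(racahColumn t a₁ a₂ a₃ a₄ b₁ * racahColumn t a₁ a₂ a₃ a₄ b₂ * racahColumn t a₁ a₂ a₃ a₄ b₃ /
      (qfact t (a₁ + N - 1) * qfact t (a₂ + N - 1) * qfact t (a₃ + N - 1) *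
        qfact t (a₄ + N - 1)))

noncomputable def racahTerm (b₁ b₂ b₃ w : ℤ) : ℝ :=
  (-1 : ℝ) ^ w * qfact t (w + N - 1) /
    (qfact t (w - a₁) * qfact t (w - a₂ + N - 2) * qfact t (w - a₃) * qfact t (w - a₄) *
      qfact t (b₁ - w) * qfact t (b₂ - w) * qfact t (b₃ - w))

noncomputable def racahSixJ (b₁ b₂ b₃ : ℤ) : ℝ :=
  racahDelta t N a₁ a₂ a₃ a₄ b₁ b₂ b₃ * qfact t (N - 1) * qfact t (N - 2) *
    ∑ w ∈ Icc (max (max a₁ a₂) (max a₃ a₄)) (min b₁ (min b₂ b₃)),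
      racahTerm t N a₁ a₂ a₃ a₄ b₁ b₂ b₃ w

theorem racahSixJ_swap₁₂ (b₁ b₂ b₃ : ℤ) :
    racahSixJ t N a₁ a₂ a₃ a₄ b₂ b₁ b₃ = racahSixJ t N a₁ a₂ a₃ a₄ b₁ b₂ b₃ := by
  rw [racahSixJ, racahSixJ, min_left_comm b₂ b₁]
  congr 1
  · rw [racahDelta, racahDelta]
    ring_nf
  · exact sum_congr rfl fun w _ => by rw [racahTerm, racahTerm]; ring

theorem racahSixJ_swap₁₃ (b₁ b₂ b₃ : ℤ) :
    racahSixJ t N a₁ a₂ a₃ a₄ b₃ b₂ b₁ = racahSixJ t N a₁ a₂ a₃ a₄ b₁ b₂ b₃ := by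
  rw [racahSixJ, racahSixJ, min_comm b₂ b₁, min_left_comm b₃ b₁, min_comm b₃ b₂]
  congr 1
  · rw [racahDelta, racahDelta]
    ring_nf
  · exact sum_congr rfl fun w _ => by rw [racahTerm, racahTerm]; ring

end Racah

structure IsRacahParams (r₁ r₂ r₃ r₄ i j a₁ a₂ a₃ a₄ b₁ b₂ b₃ : ℤ) : Prop where
  face₁ : r₁ + r₂ + i = 2 * a₁
  face₂ : r₃ + r₄ + i = 2 * a₂
  face₃ : r₁ + r₄ + j = 2 * a₃
  face₄ : r₂ + r₃ + j = 2 * a₄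
  cycle₁ : r₁ + r₂ + r₃ + r₄ = 2 * b₁
  cycle₂ : r₁ + r₃ + i + j = 2 * b₂
  cycle₃ : r₂ + r₄ + i + j = 2 * b₃

namespace IsRacahParams

variable {t : ℝ} {N r₁ r₂ r₃ r₄ i j a₁ a₂ a₃ a₄ b₁ b₂ b₃ : ℤ}
  (h : IsRacahParams r₁ r₂ r₃ r₄ i j a₁ a₂ a₃ a₄ b₁ b₂ b₃)
include h

theorem theta_mul_theta_eq_racahDelta (ht : 0 < t) (ht1 : t ≠ 1) :
    theta t N r₁ r₂ i * theta t N r₃ r₄ i * theta t N r₁ r₄ j * theta t N r₂ r₃ j =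
      racahDelta t N a₁ a₂ a₃ a₄ b₁ b₂ b₃ := by
  obtain ⟨h₁, h₂, h₃, h₄, _, _, _⟩ := h
  have hq (x y z s : ℤ) : 0 ≤ qfact t x * qfact t y * qfact t z / qfact t s := by
    have := qfact_pos ht ht1
    exact (div_pos (mul_pos (mul_pos (this x) (this y)) (this z)) (this s)).le
  rw [theta_eq t N h₁ (x := b₁ - a₂) (y := b₂ - a₄) (z := b₃ - a₃) (by omega) (by omega) (by omega),
    theta_eq t N h₂ (x := b₁ - a₁) (y := b₂ - a₃) (z := b₃ - a₄) (by omega) (by omega) (by omega),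
    theta_eq t N h₃ (x := b₁ - a₄) (y := b₂ - a₂) (z := b₃ - a₁) (by omega) (by omega) (by omega),
    theta_eq t N h₄ (x := b₁ - a₃) (y := b₃ - a₂) (z := b₂ - a₁) (by omega) (by omega) (by omega),
    ← Real.sqrt_mul' _ (hq ..), ← Real.sqrt_mul' _ (hq ..), ← Real.sqrt_mul' _ (hq ..),
    racahDelta, racahColumn, racahColumn, racahColumn]
  congr 1
  ring

theorem mMin_eq : mMin r₁ r₂ r₃ r₄ i j = b₁ - min b₁ (min b₂ b₃) := by
  obtain ⟨-, -, -, -, _, _, _⟩ := h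
  rw [mMin]
  omega

theorem mMax_eq : mMax r₁ r₂ r₃ r₄ i j = b₁ - max (max a₁ a₂) (max a₃ a₄) := by
  obtain ⟨_, _, _, _, _, -, -⟩ := h
  rw [mMax]
  omega

theorem sum_eq_sum_racahTerm :
    ∑ m ∈ Icc (mMin r₁ r₂ r₃ r₄ i j) (mMax r₁ r₂ r₃ r₄ i j),
      (-1 : ℝ) ^ (rho r₁ r₂ r₃ r₄ - m) * qfact t (rho r₁ r₂ r₃ r₄ + N - 1 - m) /
        (qfact t m * qfact t ((r₃ + r₄ - i) / 2 - m) * qfact t ((r₂ + r₃ - j) / 2 - m) *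
          qfact t ((r₁ + r₄ - j) / 2 - m) * qfact t ((i + j - r₂ - r₄) / 2 + m) *
          qfact t ((r₁ + r₂ - i) / 2 + (N - 2) - m) * qfact t ((i + j - r₁ - r₃) / 2 + m)) =
      ∑ w ∈ Icc (max (max a₁ a₂) (max a₃ a₄)) (min b₁ (min b₂ b₃)),
        racahTerm t N a₁ a₂ a₃ a₄ b₁ b₂ b₃ w := by
  rw [h.mMin_eq, h.mMax_eq]
  obtain ⟨_, _, _, _, _, _, _⟩ := h
  refine sum_nbij' (b₁ - ·) (b₁ - ·) (fun _ hm => ?_) (fun _ hw => ?_)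
    (fun _ _ => by omega) (fun _ _ => by omega) (fun m _ => ?_)
  · rw [mem_Icc] at hm ⊢
    omega
  · rw [mem_Icc] at hw ⊢
    omega
  · rw [racahTerm, show rho r₁ r₂ r₃ r₄ = b₁ by rw [rho]; omega,
      show (r₃ + r₄ - i) / 2 = b₁ - a₁ by omega, show (r₂ + r₃ - j) / 2 = b₁ - a₃ by omega,
      show (r₁ + r₄ - j) / 2 = b₁ - a₄ by omega, show (i + j - r₂ - r₄) / 2 = b₂ - b₁ by omega,
      show (r₁ + r₂ - i) / 2 = b₁ - a₂ by omega, show (i + j - r₁ - r₃) / 2 = b₃ - b₁ by omega]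
    ring_nf

theorem F_two_eq_racahSixJ (ht : 0 < t) (ht1 : t ≠ 1) :
    F t 2 N r₁ r₂ i r₃ r₄ j = racahSixJ t N a₁ a₂ a₃ a₄ b₁ b₂ b₃ := by
  simp only [F, Kprime, racahSixJ, if_pos, if_neg (show (2 : ℕ) ≠ 1 by decide), mul_one,
    mul_zero, add_zero]
  rw [h.theta_mul_theta_eq_racahDelta ht ht1, h.sum_eq_sum_racahTerm]

theorem regge₂₄ :
    IsRacahParams r₁ (b₃ - r₄) r₃ (b₃ - r₂) (b₃ - j) (b₃ - i) a₁ a₂ a₃ a₄ b₂ b₁ b₃ := by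
  obtain ⟨_, _, _, _, _, _, _⟩ := h
  constructor <;> omega

theorem regge₁₃ :
    IsRacahParams (b₂ - r₃) r₂ (b₂ - r₁) r₄ (b₂ - j) (b₂ - i) a₁ a₂ a₃ a₄ b₃ b₂ b₁ := by
  obtain ⟨_, _, _, _, _, _, _⟩ := h
  constructor <;> omega

theorem F_two_regge₂₄ (ht : 0 < t) (ht1 : t ≠ 1) :
    F t 2 N r₁ r₂ i r₃ r₄ j = F t 2 N r₁ (b₃ - r₄) (b₃ - j) r₃ (b₃ - r₂) (b₃ - i) := by
  rw [h.F_two_eq_racahSixJ ht ht1, h.regge₂₄.F_two_eq_racahSixJ ht ht1, racahSixJ_swap₁₂]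

theorem F_two_regge₁₃ (ht : 0 < t) (ht1 : t ≠ 1) :
    F t 2 N r₁ r₂ i r₃ r₄ j = F t 2 N (b₂ - r₃) r₂ (b₂ - j) (b₂ - r₁) r₄ (b₂ - i) := by
  rw [h.F_two_eq_racahSixJ ht ht1, h.regge₁₃.F_two_eq_racahSixJ ht ht1, racahSixJ_swap₁₃]

end IsRacahParams

section Admissible

variable {r₁ r₂ r₃ r₄ i j N : ℤ} (h : Admissible r₁ r₂ r₃ r₄ i j N)
include h

theorem Admissible.isRacahParams :
    IsRacahParams r₁ r₂ r₃ r₄ i j ((r₁ + r₂ + i) / 2) ((r₃ + r₄ + i) / 2) ((r₁ + r₄ + j) / 2)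
      ((r₂ + r₃ + j) / 2) ((r₁ + r₂ + r₃ + r₄) / 2) ((r₁ + r₃ + i + j) / 2)
      ((r₂ + r₄ + i + j) / 2) := by
  obtain ⟨-, -, -, -, -, -, -, _, _, _, _, -⟩ := h
  constructor <;> omega

theorem Admissible.regge₂₄ {k : ℤ} (hk : r₂ + r₄ + i + j = 2 * k) :
    Admissible r₁ (k - r₄) r₃ (k - r₂) (k - j) (k - i) N := by
  simp only [Admissible, max_le_iff, le_min_iff, abs_le] at h ⊢
  omega

theorem Admissible.regge₁₃ {l : ℤ} (hl : r₁ + r₃ + i + j = 2 * l) :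
    Admissible (l - r₃) r₂ (l - r₁) r₄ (l - j) (l - i) N := by
  simp only [Admissible, max_le_iff, le_min_iff, abs_le] at h ⊢
  omega

end Admissible

/-- generalized Regge symmetry, type II: with `ρ′ = (r₂+r₄+i+j)/2` and
`ρ″ = (r₁+r₃+i+j)/2`, the two Regge-transformed tuples are admissible, satisfy the type II
fusion relation (first plus second equals third plus fourth), and give the same value of
`F_2^N`. -/
theorem stmt10 (t : ℝ) (ht : 0 < t) (ht1 : t ≠ 1) (r₁ r₂ r₃ r₄ i j N : ℤ)
    (hadm : Admissible r₁ r₂ r₃ r₄ i j N) (hfus : r₁ + r₂ = r₃ + r₄) :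
    Admissible r₁ ((r₂ + r₄ + i + j) / 2 - r₄) r₃ ((r₂ + r₄ + i + j) / 2 - r₂)
      ((r₂ + r₄ + i + j) / 2 - j) ((r₂ + r₄ + i + j) / 2 - i) N ∧
    r₁ + ((r₂ + r₄ + i + j) / 2 - r₄) = r₃ + ((r₂ + r₄ + i + j) / 2 - r₂) ∧
    Admissible ((r₁ + r₃ + i + j) / 2 - r₃) r₂ ((r₁ + r₃ + i + j) / 2 - r₁) r₄
      ((r₁ + r₃ + i + j) / 2 - j) ((r₁ + r₃ + i + j) / 2 - i) N ∧
    ((r₁ + r₃ + i + j) / 2 - r₃) + r₂ = ((r₁ + r₃ + i + j) / 2 - r₁) + r₄ ∧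
    F t 2 N r₁ r₂ i r₃ r₄ j =
      F t 2 N r₁ ((r₂ + r₄ + i + j) / 2 - r₄) ((r₂ + r₄ + i + j) / 2 - j)
        r₃ ((r₂ + r₄ + i + j) / 2 - r₂) ((r₂ + r₄ + i + j) / 2 - i) ∧
    F t 2 N r₁ r₂ i r₃ r₄ j =
      F t 2 N ((r₁ + r₃ + i + j) / 2 - r₃) r₂ ((r₁ + r₃ + i + j) / 2 - j)
        ((r₁ + r₃ + i + j) / 2 - r₁) r₄ ((r₁ + r₃ + i + j) / 2 - i) := by
  have hR := hadm.isRacahParams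
  exact ⟨hadm.regge₂₄ hR.cycle₃, by omega, hadm.regge₁₃ hR.cycle₂, by omega,
    hR.F_two_regge₂₄ ht ht1, hR.F_two_regge₁₃ ht ht1⟩
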